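/- arXiv:1210.0798 — 4 statements merged into one kernel-verified Lean document; each statement's English description precedes it below -/
import Mathlib

section
/- Let S be an invertible m×m complex matrix, n an integer, and define for ξ on the unit circle minus {1} the Hermitian matrix H(ξ) = (1-ξ)S + (-1)^{n+1}(1-ξ̄)Sᵀ (with the convention that we consider it as a sesquilinear form). If ξ, η ∈ S¹ \ {1} are joined by a continuous arc γ in S¹ \ {1} along which det(tS + (-1)ⁿSᵀ) ≠ 0 for all t in γ (equivalently, no point of γ is a root of the Alexander polynomial det(St + (-1)ⁿSᵀ)), then the signatures of H(ξ) and H(η) are equal. -/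
/-!
If `H(ζ)` is Hermitian at some `ζ ≠ ±1` of the unit circle, then `S̄ = (-1)^{n+1} S`, and then
`H(ζ)` is Hermitian for every `ζ`. On the circle `H(ζ) = (1 - ζ)ζ⁻¹ (ζS + (-1)ⁿSᵀ)`, so `H(γ t)`
is a continuous path of nonsingular Hermitian matrices. The signature is locally constant at a
nonsingular Hermitian matrix `A`: if `‖B - A‖` is smaller than every `|λᵢ(A)|`, then the
Hermitian form of `B` is positive definite on the span of the eigenvectors of `A` with positive
eigenvalue and negative definite on the span of those with negative eigenvalue, and these
dimensions add up to the size of `A`. An integer-valued locally constant function on `[0, 1]` is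
constant.
-/

open Matrix

/-- Levine–Tristram form `(1-ξ)S + (-1)^{n+1}(1-ξ̄)Sᵀ`. -/
noncomputable def LTform {ι : Type*} [Fintype ι] (S : Matrix ι ι ℂ) (n : ℕ) (ξ : ℂ) :
    Matrix ι ι ℂ :=
  (1 - ξ) • S + ((-1 : ℂ) ^ (n + 1) * (1 - (starRingEnd ℂ) ξ)) • Sᵀ

/-- Signature of a Hermitian matrix: number of positive minus number of negative
eigenvalues. -/
noncomputable def matSig {ι : Type*} [Fintype ι] [DecidableEq ι]
    {A : Matrix ι ι ℂ} (hA : A.IsHermitian) : ℤ :=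
  ((Finset.univ.filter fun i => 0 < hA.eigenvalues i).card : ℤ) -
  ((Finset.univ.filter fun i => hA.eigenvalues i < 0).card : ℤ)

/-- Nullity of a matrix: dimension of its kernel. -/
noncomputable def matNullity {ι : Type*} [Fintype ι] (A : Matrix ι ι ℂ) : ℕ :=
  Module.finrank ℂ (LinearMap.ker A.mulVecLin)

open ComplexConjugate Finset Topology

section DiagonalForm

variable {𝕜 ι E : Type*} [RCLike 𝕜] [Fintype ι] [AddCommGroup E] [Module 𝕜 E]

theorem Module.Basis.sum_pos_of_mem_span_image (b : Module.Basis ι 𝕜 E) {w : ι → ℝ} {s : Set ι}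
    (hs : ∀ i ∈ s, 0 < w i) {x : E} (hx : x ∈ Submodule.span 𝕜 (b '' s)) (hx0 : x ≠ 0) :
    0 < ∑ i, w i * ‖b.repr x i‖ ^ 2 := by
  have hsupp := b.repr_support_subset_of_mem_span s hx
  have hzero : ∀ i ∉ s, b.repr x i = 0 := fun i hi =>
    Finsupp.notMem_support_iff.mp fun h => hi (hsupp h)
  obtain ⟨i, hi⟩ : ∃ i, b.repr x i ≠ 0 := by
    by_contra! h
    exact hx0 (b.repr.map_eq_zero_iff.mp (Finsupp.ext h))
  have his : i ∈ s := by_contra fun h => hi (hzero i h)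
  refine Finset.sum_pos' (fun j _ => ?_) ⟨i, mem_univ i, by positivity [hs i his, hi]⟩
  by_cases hj : j ∈ s
  · exact mul_nonneg (hs j hj).le (sq_nonneg _)
  · simp [hzero j hj]

theorem Module.Basis.finrank_le_card_pos (b : Module.Basis ι 𝕜 E) (w : ι → ℝ)
    (V : Submodule 𝕜 E) (hV : ∀ x ∈ V, x ≠ 0 → 0 < ∑ i, w i * ‖b.repr x i‖ ^ 2) :
    Module.finrank 𝕜 V ≤ #{i | 0 < w i} := by
  let f : V →ₗ[𝕜] ({i // 0 < w i} → 𝕜) := LinearMap.pi fun i => (b.coord i).comp V.subtype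
  have hf : Function.Injective f := by
    rw [← LinearMap.ker_eq_bot, Submodule.eq_bot_iff]
    intro x hx
    by_contra hx0
    refine (hV x x.2 (by simpa using hx0)).not_ge (Finset.sum_nonpos fun i _ => ?_)
    by_cases hi : 0 < w i
    · have : b.repr x i = 0 := congrFun hx ⟨i, hi⟩
      simp [this]
    · exact mul_nonpos_of_nonpos_of_nonneg (not_lt.mp hi) (sq_nonneg _)
  simpa [Fintype.card_subtype] using LinearMap.finrank_le_finrank_of_injective hf

end DiagonalForm

theorem Module.Basis.finrank_span_image_finset {K ι E : Type*} [Field K] [AddCommGroup E]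
    [Module K E] (b : Module.Basis ι K E) (s : Finset ι) :
    Module.finrank K (Submodule.span K (b '' s)) = #s := by
  rw [Set.image_eq_range]
  exact (finrank_span_eq_card (b.linearIndependent.comp _ Subtype.val_injective)).trans
    (Fintype.card_coe s)

theorem card_pos_add_card_neg_le {ι : Type*} [Fintype ι] (w : ι → ℝ) :
    #{i | 0 < w i} + #{i | w i < 0} ≤ Fintype.card ι := by
  classical
  rw [← card_union_of_disjoint (disjoint_filter.mpr fun i _ h1 h2 => h1.not_gt h2)]
  exact card_le_univ _

theorem card_pos_add_card_neg {ι : Type*} [Fintype ι] {w : ι → ℝ} (hw : ∀ i, w i ≠ 0) :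
    #{i | 0 < w i} + #{i | w i < 0} = Fintype.card ι := by
  classical
  rw [← card_union_of_disjoint (disjoint_filter.mpr fun i _ h1 h2 => h1.not_gt h2),
    ← card_univ]
  congr 1
  ext i
  simpa using (hw i).symm.lt_or_gt

theorem ContinuousLinearMap.abs_reApplyInnerSelf_le {𝕜 F : Type*} [RCLike 𝕜]
    [NormedAddCommGroup F] [InnerProductSpace 𝕜 F] (T : F →L[𝕜] F) (x : F) :
    |T.reApplyInnerSelf x| ≤ ‖T‖ * ‖x‖ ^ 2 := by
  grw [reApplyInnerSelf_apply, RCLike.abs_re_le_norm, norm_inner_le_norm, le_opNorm]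
  exact le_of_eq (by ring)

namespace Matrix

section RCLike

open scoped Norms.L2Operator

variable {𝕜 n : Type*} [RCLike 𝕜] [Fintype n] [DecidableEq n]

theorem abs_reApplyInnerSelf_toEuclideanCLM_sub_le (A B : Matrix n n 𝕜)
    (x : EuclideanSpace 𝕜 n) :
    |(toEuclideanCLM (𝕜 := 𝕜) B).reApplyInnerSelf x -
        (toEuclideanCLM (𝕜 := 𝕜) A).reApplyInnerSelf x| ≤ ‖B - A‖ * ‖x‖ ^ 2 := by
  calc _ = |(toEuclideanCLM (𝕜 := 𝕜) (B - A)).reApplyInnerSelf x| := by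
        simp [ContinuousLinearMap.reApplyInnerSelf_apply, inner_sub_left]
    _ ≤ _ := (toEuclideanCLM (𝕜 := 𝕜) (B - A)).abs_reApplyInnerSelf_le x

namespace IsHermitian

variable {A B : Matrix n n 𝕜}

theorem eigenvectorBasis_repr_toEuclideanCLM (hA : A.IsHermitian) (x : EuclideanSpace 𝕜 n)
    (i : n) :
    hA.eigenvectorBasis.repr (toEuclideanCLM (𝕜 := 𝕜) A x) i =
      hA.eigenvalues i * hA.eigenvectorBasis.repr x i := by
  simp only [eigenvectorBasis, eigenvalues, eigenvalues₀, OrthonormalBasis.repr_reindex]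
  exact (isSymmetric_toEuclideanLin_iff.mpr hA).eigenvectorBasis_apply_self_apply _ x _

theorem reApplyInnerSelf_eq_sum (hA : A.IsHermitian) (x : EuclideanSpace 𝕜 n) :
    (toEuclideanCLM (𝕜 := 𝕜) A).reApplyInnerSelf x =
      ∑ i, hA.eigenvalues i * ‖hA.eigenvectorBasis.repr x i‖ ^ 2 := by
  rw [ContinuousLinearMap.reApplyInnerSelf_apply, ← hA.eigenvectorBasis.repr.inner_map_map,
    PiLp.inner_apply, map_sum]
  refine Finset.sum_congr rfl fun i _ => ?_
  rw [eigenvectorBasis_repr_toEuclideanCLM, ← smul_eq_mul, inner_smul_left, RCLike.conj_ofReal,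
    RCLike.re_ofReal_mul, inner_self_eq_norm_sq]

theorem finrank_le_card_pos (hA : A.IsHermitian) (V : Submodule 𝕜 (EuclideanSpace 𝕜 n))
    (hV : ∀ x ∈ V, x ≠ 0 → 0 < (toEuclideanCLM (𝕜 := 𝕜) A).reApplyInnerSelf x) :
    Module.finrank 𝕜 V ≤ #{i | 0 < hA.eigenvalues i} :=
  hA.eigenvectorBasis.toBasis.finrank_le_card_pos _ V
    (by simpa [reApplyInnerSelf_eq_sum hA] using hV)

theorem finrank_le_card_neg (hA : A.IsHermitian) (V : Submodule 𝕜 (EuclideanSpace 𝕜 n))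
    (hV : ∀ x ∈ V, x ≠ 0 → (toEuclideanCLM (𝕜 := 𝕜) A).reApplyInnerSelf x < 0) :
    Module.finrank 𝕜 V ≤ #{i | hA.eigenvalues i < 0} := by
  simpa using hA.eigenvectorBasis.toBasis.finrank_le_card_pos (fun i => -hA.eigenvalues i) V
    (by simpa [reApplyInnerSelf_eq_sum hA] using hV)

theorem reApplyInnerSelf_pos_of_mem_span (hA : A.IsHermitian) {s : Set n}
    (hs : ∀ i ∈ s, ‖B - A‖ < hA.eigenvalues i) {x : EuclideanSpace 𝕜 n}
    (hx : x ∈ Submodule.span 𝕜 (hA.eigenvectorBasis '' s)) (hx0 : x ≠ 0) :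
    0 < (toEuclideanCLM (𝕜 := 𝕜) B).reApplyInnerSelf x := by
  have := hA.eigenvectorBasis.toBasis.sum_pos_of_mem_span_image
    (w := fun i => hA.eigenvalues i - ‖B - A‖) (fun i hi => sub_pos.mpr (hs i hi))
    (by simpa using hx) hx0
  simp only [OrthonormalBasis.coe_toBasis_repr_apply, sub_mul, Finset.sum_sub_distrib,
    ← Finset.mul_sum, ← hA.reApplyInnerSelf_eq_sum, ← EuclideanSpace.norm_sq_eq,
    LinearIsometryEquiv.norm_map] at this
  linarith [(abs_le.mp (abs_reApplyInnerSelf_toEuclideanCLM_sub_le A B x)).1]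

theorem reApplyInnerSelf_neg_of_mem_span (hA : A.IsHermitian) {s : Set n}
    (hs : ∀ i ∈ s, ‖B - A‖ < -hA.eigenvalues i) {x : EuclideanSpace 𝕜 n}
    (hx : x ∈ Submodule.span 𝕜 (hA.eigenvectorBasis '' s)) (hx0 : x ≠ 0) :
    (toEuclideanCLM (𝕜 := 𝕜) B).reApplyInnerSelf x < 0 := by
  have := hA.eigenvectorBasis.toBasis.sum_pos_of_mem_span_image
    (w := fun i => -hA.eigenvalues i - ‖B - A‖) (fun i hi => sub_pos.mpr (hs i hi))
    (by simpa using hx) hx0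
  simp only [OrthonormalBasis.coe_toBasis_repr_apply, sub_mul, neg_mul, Finset.sum_sub_distrib,
    Finset.sum_neg_distrib, ← Finset.mul_sum, ← hA.reApplyInnerSelf_eq_sum,
    ← EuclideanSpace.norm_sq_eq, LinearIsometryEquiv.norm_map] at this
  linarith [(abs_le.mp (abs_reApplyInnerSelf_toEuclideanCLM_sub_le A B x)).2]

theorem eigenvalues_ne_zero (hA : A.IsHermitian) (hdet : A.det ≠ 0) (i : n) :
    hA.eigenvalues i ≠ 0 := by
  rw [hA.det_eq_prod_eigenvalues, Finset.prod_ne_zero_iff] at hdet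
  exact fun h => hdet i (mem_univ i) (by simp [h])

theorem eventually_norm_sub_lt (hA : A.IsHermitian) (hdet : A.det ≠ 0) :
    ∀ᶠ B in 𝓝 A, ∀ i, ‖B - A‖ < |hA.eigenvalues i| :=
  Filter.eventually_all.mpr fun i => by
    filter_upwards [Metric.ball_mem_nhds A (abs_pos.mpr (hA.eigenvalues_ne_zero hdet i))] with B hB
    rwa [Metric.mem_ball, dist_eq_norm] at hB

end IsHermitian

end RCLike

namespace IsHermitian

variable {n : Type*} [Fintype n] [DecidableEq n] {A B : Matrix n n ℂ}

open scoped Norms.L2Operator in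
theorem matSig_eq_of_norm_sub_lt (hA : A.IsHermitian) (hB : B.IsHermitian)
    (h : ∀ i, ‖B - A‖ < |hA.eigenvalues i|) : matSig hB = matSig hA := by
  have hP := hB.finrank_le_card_pos _ fun x hx hx0 =>
    hA.reApplyInnerSelf_pos_of_mem_span (s := ↑({i | 0 < hA.eigenvalues i} : Finset n))
      (fun i hi => abs_of_pos (by simpa using hi) ▸ h i) hx hx0
  have hN := hB.finrank_le_card_neg _ fun x hx hx0 =>
    hA.reApplyInnerSelf_neg_of_mem_span (s := ↑({i | hA.eigenvalues i < 0} : Finset n))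
      (fun i hi => abs_of_neg (by simpa using hi) ▸ h i) hx hx0
  rw [← hA.eigenvectorBasis.coe_toBasis, Module.Basis.finrank_span_image_finset] at hP hN
  have hB_le := card_pos_add_card_neg_le hB.eigenvalues
  have hA_eq := card_pos_add_card_neg fun i => abs_pos.mp ((norm_nonneg _).trans_lt (h i))
  unfold matSig
  omega

theorem eventually_matSig_eq (hA : A.IsHermitian) (hdet : A.det ≠ 0) :
    ∀ᶠ B in 𝓝 A, ∀ hB : B.IsHermitian, matSig hB = matSig hA :=
  (hA.eventually_norm_sub_lt hdet).mono fun _ h hB => matSig_eq_of_norm_sub_lt hA hB h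

end IsHermitian

end Matrix

theorem IsPreconnected.matSig_eq {X n : Type*} [TopologicalSpace X] [Fintype n] [DecidableEq n]
    {s : Set X} (hs : IsPreconnected s) {H : X → Matrix n n ℂ} (hH : ∀ x, (H x).IsHermitian)
    (hc : ContinuousOn H s) (hdet : ∀ x ∈ s, (H x).det ≠ 0) {x y : X} (hx : x ∈ s) (hy : y ∈ s) :
    matSig (hH x) = matSig (hH y) := by
  refine hs.constant (f := fun x => matSig (hH x)) (fun x hx => ?_) hx hy
  have := (hc x hx).eventually ((hH x).eventually_matSig_eq (hdet x hx))
  exact tendsto_const_nhds.congr' (this.mono fun y hy => (hy (hH y)).symm)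

section LTform

variable {ι : Type*} [Fintype ι] {S : Matrix ι ι ℂ} {n : ℕ} {ζ : ℂ}

theorem map_conj_eq_of_isHermitian_LTform (hζ : (1 - ζ) ^ 2 ≠ (1 - conj ζ) ^ 2)
    (hH : (LTform S n ζ).IsHermitian) : S.map conj = (-1 : ℂ) ^ (n + 1) • S := by
  have hε : ((-1 : ℂ) ^ (n + 1)) ^ 2 = 1 := by rw [pow_right_comm, neg_one_sq, one_pow]
  ext i j
  have hij := congr_fun₂ hH i j
  have hji := congr_fun₂ hH j i
  simp only [LTform, conjTranspose_apply, Matrix.add_apply, Matrix.smul_apply, transpose_apply,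
    smul_eq_mul, star_add, star_mul', Complex.star_def, map_sub, map_one, map_pow, map_neg,
    Complex.conj_conj] at hij hji
  simp only [map_apply, Matrix.smul_apply, smul_eq_mul]
  refine mul_left_cancel₀ (sub_ne_zero.mpr hζ) ?_
  linear_combination ((-1 : ℂ) ^ (n + 1) * (1 - ζ)) * hij - (1 - conj ζ) * hji +
    ((1 - ζ) * (1 - conj ζ) * S j i - (1 - ζ) ^ 2 * conj (S i j)) * hε

theorem one_sub_sq_ne_one_sub_conj_sq (h1 : ‖ζ‖ = 1) (hne1 : ζ ≠ 1) (hne : ζ ≠ -1) :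
    (1 - ζ) ^ 2 ≠ (1 - conj ζ) ^ 2 := by
  have hζ0 : ζ ≠ 0 := by rintro rfl; simp at h1
  rw [← Complex.inv_eq_conj h1]
  intro h
  have : (1 - ζ) ^ 3 * (1 + ζ) = 0 := by
    field_simp at h
    linear_combination -h
  rcases mul_eq_zero.mp this with h | h
  · exact hne1 (sub_eq_zero.mp (pow_eq_zero_iff (by norm_num) |>.mp h)).symm
  · exact hne (eq_neg_of_add_eq_zero_right h)

theorem isHermitian_LTform (hS : S.map conj = (-1 : ℂ) ^ (n + 1) • S) (ζ : ℂ) :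
    (LTform S n ζ).IsHermitian := by
  have hε : ((-1 : ℂ) ^ (n + 1)) ^ 2 = 1 := by rw [pow_right_comm, neg_one_sq, one_pow]
  have hS' (i j : ι) : conj (S i j) = (-1 : ℂ) ^ (n + 1) * S i j := by
    simpa using congr_fun₂ hS i j
  ext i j
  simp only [LTform, conjTranspose_apply, Matrix.add_apply, Matrix.smul_apply, transpose_apply,
    smul_eq_mul, star_add, star_mul', Complex.star_def, map_sub, map_one, map_pow, map_neg,
    Complex.conj_conj, hS']
  linear_combination ((1 - ζ) * S i j) * hε

theorem LTform_eq_smul (h1 : ‖ζ‖ = 1) :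
    LTform S n ζ = ((1 - ζ) * ζ⁻¹) • (ζ • S + (-1 : ℂ) ^ n • Sᵀ) := by
  have hζ0 : ζ ≠ 0 := by rintro rfl; simp at h1
  rw [LTform, ← Complex.inv_eq_conj h1, smul_add, smul_smul, smul_smul]
  congr 2
  · field_simp
  · field_simp
    ring

theorem det_LTform_ne_zero [DecidableEq ι] (h1 : ‖ζ‖ = 1) (hne1 : ζ ≠ 1)
    (hdet : (ζ • S + (-1 : ℂ) ^ n • Sᵀ).det ≠ 0) : (LTform S n ζ).det ≠ 0 := by
  have hζ0 : ζ ≠ 0 := by rintro rfl; simp at h1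
  rw [LTform_eq_smul h1, det_smul]
  exact mul_ne_zero (pow_ne_zero _ (mul_ne_zero (sub_ne_zero.mpr hne1.symm) (inv_ne_zero hζ0)))
    hdet

theorem continuous_LTform (S : Matrix ι ι ℂ) (n : ℕ) : Continuous (LTform S n) := by
  unfold LTform
  fun_prop

end LTform

theorem stmt1_general {m : ℕ} (S : Matrix (Fin m) (Fin m) ℂ) (n : ℕ)
    (ξ η : ℂ) (γ : ℝ → ℂ) (hγc : ContinuousOn γ (Set.Icc 0 1))
    (hγ0 : γ 0 = ξ) (hγ1 : γ 1 = η)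
    (hcirc : ∀ t ∈ Set.Icc (0 : ℝ) 1, ‖γ t‖ = 1 ∧ γ t ≠ 1)
    (hdet : ∀ t ∈ Set.Icc (0 : ℝ) 1, ((γ t) • S + ((-1 : ℂ) ^ n) • Sᵀ).det ≠ 0)
    (hHξ : (LTform S n ξ).IsHermitian) (hHη : (LTform S n η).IsHermitian) :
    matSig hHξ = matSig hHη := by
  subst hγ0 hγ1
  have h0 : (0 : ℝ) ∈ Set.Icc 0 1 := Set.left_mem_Icc.mpr zero_le_one
  have h1 : (1 : ℝ) ∈ Set.Icc 0 1 := Set.right_mem_Icc.mpr zero_le_one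
  by_cases hends : γ 0 = -1 ∧ γ 1 = -1
  · revert hHξ hHη
    rw [hends.1, hends.2]
    exact fun _ _ => rfl
  have hS : S.map conj = (-1 : ℂ) ^ (n + 1) • S := by
    rcases not_and_or.mp hends with h | h
    · exact map_conj_eq_of_isHermitian_LTform
        (one_sub_sq_ne_one_sub_conj_sq (hcirc 0 h0).1 (hcirc 0 h0).2 h) hHξ
    · exact map_conj_eq_of_isHermitian_LTform
        (one_sub_sq_ne_one_sub_conj_sq (hcirc 1 h1).1 (hcirc 1 h1).2 h) hHη
  exact isPreconnected_Icc.matSig_eq (fun t => isHermitian_LTform hS (γ t))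
    ((continuous_LTform S n).comp_continuousOn hγc)
    (fun t ht => det_LTform_ne_zero (hcirc t ht).1 (hcirc t ht).2 (hdet t ht)) h0 h1

/-- If `ξ, η ∈ S¹ \ {1}` are joined by a continuous arc `γ` in `S¹ \ {1}` along which
`det(tS + (-1)ⁿSᵀ) ≠ 0`, then the signatures of the Levine–Tristram Hermitian forms
at `ξ` and `η` agree. -/
theorem stmt1 {m : ℕ} (S : Matrix (Fin m) (Fin m) ℂ) (hS : IsUnit S.det) (n : ℕ)
    (ξ η : ℂ) (hξ : ‖ξ‖ = 1 ∧ ξ ≠ 1) (hη : ‖η‖ = 1 ∧ η ≠ 1)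
    (γ : ℝ → ℂ) (hγc : ContinuousOn γ (Set.Icc 0 1))
    (hγ0 : γ 0 = ξ) (hγ1 : γ 1 = η)
    (hcirc : ∀ t ∈ Set.Icc (0 : ℝ) 1, ‖γ t‖ = 1 ∧ γ t ≠ 1)
    (hdet : ∀ t ∈ Set.Icc (0 : ℝ) 1, ((γ t) • S + ((-1 : ℂ) ^ n) • Sᵀ).det ≠ 0)
    (hHξ : (LTform S n ξ).IsHermitian) (hHη : (LTform S n η).IsHermitian) :
    matSig hHξ = matSig hHη :=
  stmt1_general S n ξ η γ hγc hγ0 hγ1 hcirc hdet hHξ hHη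
end

section
/- Let S = S_ndeg ⊕ S₀ with S_ndeg invertible and S₀ the zero matrix, and ξ ∈ S¹ \ {1}. If ξ is not a root of Δ(t) = det(S_ndeg·t + (-1)ⁿ S_ndegᵀ), then the nullity of (1-ξ)S + (-1)^{n+1}(1-ξ̄)Sᵀ equals the size n₀ of S₀; if ξ is a root of Δ, the nullity is strictly greater than n₀. -/
open Matrix

/-!
On the unit circle `ξ̄ = ξ⁻¹`, so the Levine–Tristram form of `S_ndeg` is the nonzero multiple
`(1 - ξ)/ξ` of `ξ S_ndeg + (-1)ⁿ S_ndegᵀ`, whose determinant is `Δ(ξ)`. The zero block `S₀`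
contributes its full size `n₀` to the kernel, so the nullity is `n₀` plus the nullity of
`ξ S_ndeg + (-1)ⁿ S_ndegᵀ`, and the latter vanishes exactly when `Δ(ξ) ≠ 0`.
-/

open Module

namespace LinearMap

variable {K U V W : Type*} [DivisionRing K] [AddCommGroup U] [Module K U] [AddCommGroup V]
  [Module K V] [AddCommGroup W] [Module K W] [FiniteDimensional K U] [FiniteDimensional K V]

theorem finrank_ker_comp_add_finrank_of_surjective (f : V →ₗ[K] W) {g : U →ₗ[K] V}
    (hg : Function.Surjective g) :
    finrank K (ker (f ∘ₗ g)) + finrank K V = finrank K (ker f) + finrank K U := by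
  have hrange : range (f ∘ₗ g) = range f := range_comp_of_range_eq_top f (range_eq_top.2 hg)
  have hfg := finrank_range_add_finrank_ker (f ∘ₗ g)
  have hf := finrank_range_add_finrank_ker f
  rw [hrange] at hfg
  omega

end LinearMap

section

variable {ι κ : Type*} [Fintype ι] [Fintype κ]

theorem ker_mulVecLin_fromBlocks_zero {K : Type*} [Field K] (A : Matrix ι ι K) :
    LinearMap.ker (fromBlocks A 0 0 (0 : Matrix κ κ K)).mulVecLin =
      LinearMap.ker (A.mulVecLin ∘ₗ LinearMap.funLeft K K Sum.inl) := by
  ext v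
  simp [fromBlocks_mulVec, funext_iff, Function.comp_def, LinearMap.funLeft]

theorem matNullity_fromBlocks_zero (A : Matrix ι ι ℂ) :
    matNullity (fromBlocks A 0 0 (0 : Matrix κ κ ℂ)) = matNullity A + Fintype.card κ := by
  have h := LinearMap.finrank_ker_comp_add_finrank_of_surjective A.mulVecLin
    (LinearMap.funLeft_surjective_of_injective ℂ ℂ (Sum.inl : ι → ι ⊕ κ) Sum.inl_injective)
  simp only [finrank_fintype_fun_eq_card, Fintype.card_sum] at h
  rw [matNullity, ker_mulVecLin_fromBlocks_zero, matNullity]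
  omega

theorem matNullity_smul (A : Matrix ι ι ℂ) {c : ℂ} (hc : c ≠ 0) :
    matNullity (c • A) = matNullity A := by
  have hlin : (c • A).mulVecLin = c • A.mulVecLin := by
    ext v : 1
    simp
  rw [matNullity, hlin, LinearMap.ker_smul _ _ hc, matNullity]

theorem matNullity_eq_zero_iff [DecidableEq ι] (A : Matrix ι ι ℂ) :
    matNullity A = 0 ↔ A.det ≠ 0 := by
  rw [matNullity, Submodule.finrank_eq_zero, ker_mulVecLin_eq_bot_iff, Ne,
    ← exists_mulVec_eq_zero_iff, not_exists]
  exact forall_congr' fun v => by tauto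

theorem LTform_fromBlocks_zero (A : Matrix ι ι ℂ) (n : ℕ) (ξ : ℂ) :
    LTform (fromBlocks A 0 0 (0 : Matrix κ κ ℂ)) n ξ = fromBlocks (LTform A n ξ) 0 0 0 := by
  simp [LTform, fromBlocks_transpose, fromBlocks_smul, fromBlocks_add]

theorem LTform_eq_smul_of_norm_eq_one (A : Matrix ι ι ℂ) (n : ℕ) {ξ : ℂ} (hξ : ‖ξ‖ = 1) :
    LTform A n ξ = ((1 - ξ) / ξ) • (ξ • A + ((-1 : ℂ) ^ n) • Aᵀ) := by
  have hξ0 : ξ ≠ 0 := ne_zero_of_norm_ne_zero (by simp [hξ])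
  rw [LTform, ← Complex.inv_eq_conj hξ, smul_add, smul_smul, smul_smul, pow_succ]
  congr 2
  · field_simp
  · field_simp
    ring

end

theorem stmt3_general {k n₀ : ℕ} (Snd : Matrix (Fin k) (Fin k) ℂ)
    (n : ℕ) (ξ : ℂ) (hξ : ‖ξ‖ = 1) (hξ1 : ξ ≠ 1)
    (S : Matrix (Fin k ⊕ Fin n₀) (Fin k ⊕ Fin n₀) ℂ)
    (hS : S = Matrix.fromBlocks Snd 0 0 (0 : Matrix (Fin n₀) (Fin n₀) ℂ)) :
    ((ξ • Snd + ((-1 : ℂ) ^ n) • Sndᵀ).det ≠ 0 → matNullity (LTform S n ξ) = n₀) ∧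
    ((ξ • Snd + ((-1 : ℂ) ^ n) • Sndᵀ).det = 0 → n₀ < matNullity (LTform S n ξ)) := by
  have hξ0 : ξ ≠ 0 := ne_zero_of_norm_ne_zero (by simp [hξ])
  have hc : (1 - ξ) / ξ ≠ 0 := div_ne_zero (sub_ne_zero.2 hξ1.symm) hξ0
  have hnull : matNullity (LTform S n ξ) =
      matNullity (ξ • Snd + ((-1 : ℂ) ^ n) • Sndᵀ) + n₀ := by
    rw [hS, LTform_fromBlocks_zero, matNullity_fromBlocks_zero,
      LTform_eq_smul_of_norm_eq_one _ _ hξ, matNullity_smul _ hc, Fintype.card_fin]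
  refine ⟨fun hdet => ?_, fun hdet => ?_⟩
  · rw [hnull, (matNullity_eq_zero_iff _).2 hdet, zero_add]
  · rw [hnull]
    exact Nat.lt_add_of_pos_left (Nat.pos_of_ne_zero fun h => (matNullity_eq_zero_iff _).1 h hdet)

/-- For `S = S_ndeg ⊕ 0_{n₀}` with `S_ndeg` invertible and `ξ ∈ S¹ \ {1}`: if `ξ` is not a
root of the Alexander polynomial `Δ(t) = det(S_ndeg t + (-1)ⁿ S_ndegᵀ)` then the nullity of
the Levine–Tristram form equals `n₀`; if `ξ` is a root, the nullity is strictly bigger. -/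
theorem stmt3 {k n₀ : ℕ} (Snd : Matrix (Fin k) (Fin k) ℂ) (hSnd : IsUnit Snd.det)
    (n : ℕ) (ξ : ℂ) (hξ : ‖ξ‖ = 1) (hξ1 : ξ ≠ 1)
    (S : Matrix (Fin k ⊕ Fin n₀) (Fin k ⊕ Fin n₀) ℂ)
    (hS : S = Matrix.fromBlocks Snd 0 0 (0 : Matrix (Fin n₀) (Fin n₀) ℂ)) :
    ((ξ • Snd + ((-1 : ℂ) ^ n) • Sndᵀ).det ≠ 0 → matNullity (LTform S n ξ) = n₀) ∧
    ((ξ • Snd + ((-1 : ℂ) ^ n) • Sndᵀ).det = 0 → n₀ < matNullity (LTform S n ξ)) :=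
  stmt3_general Snd n ξ hξ hξ1 S hS
end

section
/- Let V be an invertible m×m complex matrix and ε = ±1. Define h = -ε V (V̄ᵀ)⁻¹ and b = -V⁻¹ - ε (V̄ᵀ)⁻¹, where V̄ᵀ denotes the conjugate transpose. Then: (i) b is ε-Hermitian, i.e., b̄ᵀ = ε b; (ii) h preserves b, i.e., h̄ᵀ b h = b; (iii) V ∘ b = h - I; and (iv) V̄ᵀ = -ε h̄ᵀ V (equivalently V̄* = -ε V h̄* in the operator formulation). Hence (ℂᵐ; b, h, V) is a simple ε-Hermitian variation structure. -/
/-!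
Everything except the invariance of `b` is a one-line computation with `V V⁻¹ = 1` and
`ε² = 1`. For the invariance, `hᴴ = -ε V⁻¹ Vᴴ`, so `hᴴ b h = V⁻¹ (Vᴴ b V) (Vᴴ)⁻¹`, and
`Vᴴ b V = -Vᴴ - ε V` is exactly what this conjugation turns back into `b`.
-/

open Matrix

namespace Matrix

variable {n R : Type*} [Fintype n] [DecidableEq n] [CommRing R] [StarRing R]

noncomputable def variationForm (V : Matrix n n R) (ε : R) : Matrix n n R :=
  -(V⁻¹) - ε • (Vᴴ)⁻¹

noncomputable def variationMonodromy (V : Matrix n n R) (ε : R) : Matrix n n R :=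
  (-ε) • (V * (Vᴴ)⁻¹)

variable (V : Matrix n n R) {ε : R}

theorem conjTranspose_variationForm (hε : star ε = ε) (hε2 : ε * ε = 1) :
    (variationForm V ε)ᴴ = ε • variationForm V ε := by
  simp only [variationForm, conjTranspose_sub, conjTranspose_neg, conjTranspose_smul, hε,
    conjTranspose_nonsing_inv, conjTranspose_conjTranspose, smul_sub, smul_neg, smul_smul, hε2,
    one_smul]
  abel

theorem conjTranspose_variationMonodromy (hε : star ε = ε) :
    (variationMonodromy V ε)ᴴ = (-ε) • (V⁻¹ * Vᴴ) := by
  rw [variationMonodromy, conjTranspose_smul, star_neg, hε, conjTranspose_mul,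
    conjTranspose_nonsing_inv, conjTranspose_conjTranspose]

theorem mul_variationForm (hV : IsUnit V.det) :
    V * variationForm V ε = variationMonodromy V ε - 1 := by
  rw [variationForm, variationMonodromy, Matrix.mul_sub, Matrix.mul_neg, mul_nonsing_inv V hV,
    Matrix.mul_smul, neg_smul]
  abel

theorem conjTranspose_eq_neg_smul_mul_conjTranspose_variationMonodromy (hV : IsUnit V.det)
    (hε : star ε = ε) (hε2 : ε * ε = 1) :
    Vᴴ = (-ε) • (V * (variationMonodromy V ε)ᴴ) := by
  rw [conjTranspose_variationMonodromy V hε, Matrix.mul_smul, smul_smul, neg_mul_neg, hε2,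
    one_smul, mul_nonsing_inv_cancel_left V _ hV]

theorem conjTranspose_mul_variationForm_mul (hV : IsUnit V.det) :
    Vᴴ * variationForm V ε * V = -Vᴴ - ε • V := by
  have hVH : IsUnit Vᴴ.det := by rw [det_conjTranspose]; exact hV.star
  rw [variationForm, Matrix.mul_sub, Matrix.sub_mul, Matrix.mul_neg, Matrix.neg_mul,
    Matrix.mul_smul, mul_nonsing_inv _ hVH, Matrix.smul_mul, Matrix.one_mul,
    nonsing_inv_mul_cancel_right _ _ hV]

theorem conjTranspose_variationMonodromy_mul_variationForm_mul (hV : IsUnit V.det)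
    (hε : star ε = ε) (hε2 : ε * ε = 1) :
    (variationMonodromy V ε)ᴴ * variationForm V ε * variationMonodromy V ε =
      variationForm V ε := by
  have hVH : IsUnit Vᴴ.det := by rw [det_conjTranspose]; exact hV.star
  calc (variationMonodromy V ε)ᴴ * variationForm V ε * variationMonodromy V ε
      = (ε * ε) • (V⁻¹ * (Vᴴ * variationForm V ε * V) * (Vᴴ)⁻¹) := by
        rw [conjTranspose_variationMonodromy V hε, variationMonodromy]
        simp only [Matrix.smul_mul, Matrix.mul_smul, smul_smul, neg_mul_neg, Matrix.mul_assoc]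
    _ = V⁻¹ * (-Vᴴ - ε • V) * (Vᴴ)⁻¹ := by
        rw [hε2, one_smul, conjTranspose_mul_variationForm_mul V hV]
    _ = variationForm V ε := by
        rw [Matrix.mul_sub, Matrix.sub_mul, Matrix.mul_neg, Matrix.neg_mul,
          mul_nonsing_inv_cancel_right _ _ hVH, Matrix.mul_smul, Matrix.smul_mul,
          nonsing_inv_mul V hV, Matrix.one_mul, variationForm]

end Matrix

/-- For an invertible complex matrix `V` and `ε = ±1`, setting `h = -εV(V̄ᵀ)⁻¹` and
`b = -V⁻¹ - ε(V̄ᵀ)⁻¹`, one gets: `b` is ε-Hermitian, `h` preserves `b`, `V·b = h - I`,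
and `V̄ᵀ = -ε·V·h̄ᵀ` — so `(ℂᵐ; b, h, V)` is a simple ε-hermitian variation structure. -/
theorem stmt9 {m : ℕ} (V : Matrix (Fin m) (Fin m) ℂ) (hV : IsUnit V.det)
    (ε : ℂ) (hε : ε = 1 ∨ ε = -1) :
    letI h := (-ε) • (V * (Vᴴ)⁻¹)
    letI b := -(V⁻¹) - ε • (Vᴴ)⁻¹
    bᴴ = ε • b ∧ hᴴ * b * h = b ∧ V * b = h - 1 ∧ Vᴴ = (-ε) • (V * hᴴ) := by
  have hεs : star ε = ε := by rcases hε with rfl | rfl <;> simp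
  have hε2 : ε * ε = 1 := by rcases hε with rfl | rfl <;> norm_num
  exact ⟨conjTranspose_variationForm V hεs hε2,
    conjTranspose_variationMonodromy_mul_variationForm_mul V hV hεs hε2,
    mul_variationForm V hV,
    conjTranspose_eq_neg_smul_mul_conjTranspose_variationMonodromy V hV hεs hε2⟩
end

section
/- Let b : U → U* be an ε-Hermitian isomorphism on a finite-dimensional complex vector space U (ε = ±1), h : U → U an automorphism with h̄* b h = b, and define V := (h - I) ∘ b⁻¹. Then V satisfies V̄* = -ε V ∘ h̄*, so (U; b, h, V) is an ε-Hermitian variation structure. -/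
open Matrix

namespace Matrix

variable {n R : Type*} [Fintype n] [DecidableEq n] [CommRing R] [StarRing R]

theorem conjTranspose_inv_eq_smul_inv {B : Matrix n n R} {ε : R} (hB : IsUnit B.det)
    (hε : ε * ε = 1) (hherm : Bᴴ = ε • B) : (B⁻¹)ᴴ = ε • B⁻¹ := by
  rw [conjTranspose_nonsing_inv, hherm]
  refine inv_eq_right_inv ?_
  rw [smul_mul_smul_comm, hε, one_smul, mul_nonsing_inv B hB]

theorem mul_inv_mul_conjTranspose_eq_inv {B H : Matrix n n R} (hB : IsUnit B.det)
    (hpres : Hᴴ * B * H = B) : H * B⁻¹ * Hᴴ = B⁻¹ := by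
  have hleft : (B⁻¹ * Hᴴ * B) * H = 1 := by
    rw [mul_assoc, mul_assoc, ← mul_assoc Hᴴ, hpres, nonsing_inv_mul B hB]
  have hright : H * (B⁻¹ * Hᴴ * B) = 1 := mul_eq_one_comm.mp hleft
  calc H * B⁻¹ * Hᴴ = H * (B⁻¹ * Hᴴ * B) * B⁻¹ := by
        simp only [Matrix.mul_assoc, mul_nonsing_inv B hB, Matrix.mul_one]
    _ = B⁻¹ := by rw [hright, one_mul]

theorem conjTranspose_sub_one_mul_inv {B H : Matrix n n R} {ε : R} (hB : IsUnit B.det)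
    (hε : ε * ε = 1) (hherm : Bᴴ = ε • B) (hpres : Hᴴ * B * H = B) :
    ((H - 1) * B⁻¹)ᴴ = (-ε) • ((H - 1) * B⁻¹ * Hᴴ) := by
  have hV : (H - 1) * B⁻¹ * Hᴴ = B⁻¹ - B⁻¹ * Hᴴ := by
    rw [sub_mul, sub_mul, one_mul, mul_inv_mul_conjTranspose_eq_inv hB hpres]
  rw [hV, conjTranspose_mul, conjTranspose_inv_eq_smul_inv hB hε hherm, conjTranspose_sub,
    conjTranspose_one, smul_mul, mul_sub, mul_one]
  module

end Matrix

/-- If `b` is an ε-Hermitian isomorphism (`Bᴴ = εB`, `B` invertible), `h` an automorphism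
with `h̄*bh = b`, and `V := (h - I)b⁻¹`, then `V̄* = -ε V h̄*`, so `(U; b, h, V)` is an
ε-hermitian variation structure. -/
theorem stmt16 {m : ℕ} (B H : Matrix (Fin m) (Fin m) ℂ) (hB : IsUnit B.det)
    (ε : ℂ) (hε : ε = 1 ∨ ε = -1) (hherm : Bᴴ = ε • B) (hpres : Hᴴ * B * H = B) :
    letI V := (H - 1) * B⁻¹
    Vᴴ = (-ε) • (V * Hᴴ) ∧ V * B = H - 1 := by
  have hεε : ε * ε = 1 := by rcases hε with rfl | rfl <;> norm_num
  exact ⟨conjTranspose_sub_one_mul_inv hB hεε hherm hpres,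
    by rw [mul_assoc, nonsing_inv_mul B hB, mul_one]⟩
end
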